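/- Let S be a right LCM monoid with a generalized scale N : S → ℕ^×. Then N^{-1}(1) = S_c. -/
import Mathlib


variable {S : Type*}

/-- The principal right ideal `sS` of a monoid. -/
def rIdeal [Monoid S] (s : S) : Set S := {x | ∃ r : S, x = s * r}

/-- A right LCM monoid: left cancellative, and any intersection of two principal
right ideals is empty or again a principal right ideal. -/
def IsRightLCMMonoid (S : Type*) [Monoid S] : Prop :=
  (∀ a b c : S, a * b = a * c → b = c) ∧
  (∀ s t : S, rIdeal s ∩ rIdeal t = (∅ : Set S) ∨ ∃ r : S, rIdeal s ∩ rIdeal t = rIdeal r)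

/-- The core of a right LCM monoid. -/
def core (S : Type*) [Monoid S] : Set S := {a | ∀ s : S, (rIdeal a ∩ rIdeal s).Nonempty}

/-- Core equivalence: `s ∼ t` iff `s * a = t * b` for some core elements `a, b`. -/
def coreEquiv [Monoid S] (s t : S) : Prop :=
  ∃ a ∈ core S, ∃ b ∈ core S, s * a = t * b

/-- A generalized scale on a right LCM monoid. -/
def IsGenScale [Monoid S] (N : S →* ℕ+) : Prop :=
  (∃ s : S, N s ≠ 1) ∧
  (∀ n : ℕ+, (∃ s : S, N s = n) →
    Nat.card (Quot (fun x y : {s : S // N s = n} => coreEquiv x.1 y.1)) = (n : ℕ)) ∧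
  (∀ s t : S, N s = N t → coreEquiv s t ∨ rIdeal s ∩ rIdeal t = (∅ : Set S)) ∧
  (∀ (s : S) (n : ℕ+), (∃ u : S, N u = n) →
    ∃ t : S, N t = n ∧ (rIdeal s ∩ rIdeal t).Nonempty)

/-- Irreducibility of an element of the image submonoid `N(S) ⊆ ℕ^×`. -/
def IrrInScale [Monoid S] (N : S →* ℕ+) (n : ℕ+) : Prop :=
  n ≠ 1 ∧ ∀ k l : ℕ+, (∃ u : S, N u = k) → (∃ v : S, N v = l) → n = k * l → k = 1 ∨ l = 1

lemma one_mem_core [Monoid S] : (1 : S) ∈ core S := by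
  intro s
  exact ⟨s, ⟨s, (one_mul s).symm⟩, ⟨1, (mul_one s).symm⟩⟩

lemma core_mul [Monoid S] {a b : S} (ha : a ∈ core S) (hb : b ∈ core S) :
    a * b ∈ core S := by
  intro t
  obtain ⟨x, ⟨p, hp⟩, ⟨q, hq⟩⟩ := ha t
  obtain ⟨y, ⟨m, hm⟩, ⟨k, hk⟩⟩ := hb p
  refine ⟨a * b * m, ⟨m, rfl⟩, ⟨q * k, ?_⟩⟩
  calc a * b * m = a * (b * m) := by rw [mul_assoc]
    _ = a * (p * k) := by rw [← hm, hk]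
    _ = (a * p) * k := by rw [mul_assoc]
    _ = (t * q) * k := by rw [← hp, hq]
    _ = t * (q * k) := by rw [mul_assoc]

lemma core_of_mul_core [Monoid S] {s a : S} (h : s * a ∈ core S) :
    s ∈ core S := by
  intro t
  obtain ⟨x, ⟨p, hp⟩, ⟨q, hq⟩⟩ := h t
  exact ⟨x, ⟨a * p, by rw [hp, mul_assoc]⟩, ⟨q, hq⟩⟩

lemma coreEquiv_symm [Monoid S] {s t : S} (h : coreEquiv s t) : coreEquiv t s := by
  obtain ⟨a, ha, b, hb, hab⟩ := h
  exact ⟨b, hb, a, ha, hab.symm⟩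

lemma core_of_coreEquiv [Monoid S] {s t : S} (h : coreEquiv s t)
    (ht : t ∈ core S) : s ∈ core S := by
  obtain ⟨a, ha, b, hb, hab⟩ := h
  exact core_of_mul_core (hab ▸ core_mul ht hb : s * a ∈ core S)

theorem stmt9 [Monoid S] (hS : IsRightLCMMonoid S)
    (N : S →* ℕ+) (hN : IsGenScale N) :
    ∀ s : S, N s = 1 ↔ s ∈ core S := by
  obtain ⟨-, hcard, hsep, -⟩ := hN
  intro s
  constructor
  · intro hs
    have h1 := hcard 1 ⟨1, map_one N⟩
    rw [PNat.one_coe, Nat.card_eq_one_iff_unique] at h1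
    have hsub := h1.1
    have heq : Quot.mk (fun x y : {s : S // N s = 1} => coreEquiv x.1 y.1) ⟨s, hs⟩
        = Quot.mk _ ⟨1, map_one N⟩ := Subsingleton.elim _ _
    have hcong := congrArg (Quot.lift (fun x : {s : S // N s = 1} => x.1 ∈ core S)
      (fun x y h => propext
        ⟨fun hx => core_of_coreEquiv (coreEquiv_symm h) hx,
         fun hy => core_of_coreEquiv h hy⟩)) heq
    simp only [Quot.lift_mk] at hcong
    rw [hcong]
    exact one_mem_core
  · intro hs
    have key : ∀ t : {u : S // N u = N s},
        Quot.mk (fun x y : {u : S // N u = N s} => coreEquiv x.1 y.1) t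
          = Quot.mk _ ⟨s, rfl⟩ := by
      intro t
      apply Quot.sound
      rcases hsep t.1 s (t.2.trans rfl) with h | h
      · exact h
      · exfalso
        obtain ⟨x, hx⟩ := hs t.1
        rw [Set.inter_comm] at hx
        rw [h] at hx
        exact hx
    have h1 := hcard (N s) ⟨s, rfl⟩
    have hsub : Subsingleton (Quot (fun x y : {u : S // N u = N s} => coreEquiv x.1 y.1)) := by
      constructor
      intro a b
      induction a using Quot.ind with | _ a =>
      induction b using Quot.ind with | _ b =>
      rw [key a, key b]
    have : Nat.card (Quot (fun x y : {u : S // N u = N s} => coreEquiv x.1 y.1)) = 1 := by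
      rw [Nat.card_eq_one_iff_unique]
      exact ⟨hsub, ⟨Quot.mk _ ⟨s, rfl⟩⟩⟩
    have : ((N s : ℕ+) : ℕ) = 1 := by rw [← h1, this]
    exact PNat.coe_injective this
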